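/- Let X' = (t',x') ∈ Q, and let R > 0 and 0 < t̄ < t' be such that the closure of B_t̄(X',R) is contained in Q and u(t,x) = min over y ∈ Ω of [(t − t̄) L((x − y)/(t − t̄)) + u(t̄, y)] for each (t,x) ∈ B_t̄(X',R). Then ⟨p − q, x − y⟩ ≤ (Λ/(t' − t̄)) |x − y|² for every x, y ∈ B(x',R), p ∈ ∇⁺u(t',x) and q ∈ ∇⁺u(t',y), where Λ = max{⟨A⁻¹z, z⟩ : z ∈ ℝⁿ, |z| = 1}. -/

import Mathlib

open scoped RealInnerProductSpace
open Filter Topology Set Metric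

noncomputable section

/-- The Lagrangian `L(q) = ½ ⟨A⁻¹ q, q⟩`. -/
def Lag {n : ℕ} (A : Matrix (Fin n) (Fin n) ℝ) (q : EuclideanSpace ℝ (Fin n)) : ℝ :=
  (1 / 2) * ⟪Matrix.toEuclideanLin A⁻¹ q, q⟫

/-- The Hamiltonian `H(p) = ½ ⟨A p, p⟩`. -/
def Ham {n : ℕ} (A : Matrix (Fin n) (Fin n) ℝ) (p : EuclideanSpace ℝ (Fin n)) : ℝ :=
  (1 / 2) * ⟪Matrix.toEuclideanLin A p, p⟫

/-- Euclidean norm on `ℝ × ℝⁿ`. -/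
def pnorm {n : ℕ} (V : ℝ × EuclideanSpace ℝ (Fin n)) : ℝ :=
  Real.sqrt (V.1 ^ 2 + ‖V.2‖ ^ 2)

/-- Euclidean pairing on `ℝ × ℝⁿ`. -/
def pairR {n : ℕ} (P V : ℝ × EuclideanSpace ℝ (Fin n)) : ℝ :=
  P.1 * V.1 + ⟪P.2, V.2⟫

/-- Open Euclidean ball in `ℝ × ℝⁿ`. -/
def pball {n : ℕ} (X : ℝ × EuclideanSpace ℝ (Fin n)) (R : ℝ) :
    Set (ℝ × EuclideanSpace ℝ (Fin n)) :=
  {Y | pnorm (Y - X) < R}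

/-- `B_t̄(X,R) = ((t̄,∞) × ℝⁿ) ∩ B(X,R)`. -/
def tball {n : ℕ} (tbar : ℝ) (X : ℝ × EuclideanSpace ℝ (Fin n)) (R : ℝ) :
    Set (ℝ × EuclideanSpace ℝ (Fin n)) :=
  {Y | tbar < Y.1} ∩ pball X R

/-- Superdifferential of `w` at `X`:
`P ∈ D⁺w(X)` iff `limsup_{Y→X} (w(Y)−w(X)−⟨P,Y−X⟩)/|Y−X| ≤ 0`. -/
def superDiff {n : ℕ} (w : ℝ × EuclideanSpace ℝ (Fin n) → ℝ)
    (X P : ℝ × EuclideanSpace ℝ (Fin n)) : Prop :=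
  ∀ ε > 0, ∀ᶠ Y in 𝓝[≠] X, w Y - w X - pairR P (Y - X) ≤ ε * pnorm (Y - X)

/-- The spatial superdifferential `∇⁺w(x)` of a function `w : ℝⁿ → ℝ`. -/
def spaceSuperDiff {n : ℕ} (w : EuclideanSpace ℝ (Fin n) → ℝ)
    (x p : EuclideanSpace ℝ (Fin n)) : Prop :=
  ∀ ε > 0, ∀ᶠ y in 𝓝[≠] x, w y - w x - ⟪p, y - x⟫ ≤ ε * ‖y - x‖

/-!
Put `s = t' - t̄` and `q(z) = ⟨A⁻¹z, z⟩`. By the representation formula, `u(t', ·)` is, on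
`B(x', R)`, a pointwise minimum of the paraboloids `z ↦ q(z - y)/(2s) + u(t̄, y)`, each minimum
being attained. Touching `u(t', ·)` from above at `a + t(b - a)` and using the exact convexity
identity of quadratic forms gives `(1-t) u(a) + t u(b) ≤ u(a + t(b - a)) + t(1-t) q(b - a)/(2s)`;
dividing by `t` and letting `t → 0⁺` yields `u(b) - u(a) ≤ ⟨p, b - a⟩ + q(b - a)/(2s)` for every
`p ∈ ∇⁺u(t', a)`. Adding this at `(x, y)` and at `(y, x)` and bounding `q ≤ Λ |·|²` concludes.
-/

section QuadraticSupport

variable {n : ℕ}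

def quadForm (M : Matrix (Fin n) (Fin n) ℝ) (v : EuclideanSpace ℝ (Fin n)) : ℝ :=
  ⟪Matrix.toEuclideanLin M v, v⟫

lemma quadForm_neg (M : Matrix (Fin n) (Fin n) ℝ) (v : EuclideanSpace ℝ (Fin n)) :
    quadForm M (-v) = quadForm M v := by
  simp [quadForm]

lemma quadForm_smul (M : Matrix (Fin n) (Fin n) ℝ) (c : ℝ) (v : EuclideanSpace ℝ (Fin n)) :
    quadForm M (c • v) = c ^ 2 * quadForm M v := by
  simp only [quadForm, map_smul, real_inner_smul_left, real_inner_smul_right]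
  ring

lemma quadForm_convex_combination (M : Matrix (Fin n) (Fin n) ℝ)
    (x h : EuclideanSpace ℝ (Fin n)) (t : ℝ) :
    (1 - t) * quadForm M x + t * quadForm M (x + h) - quadForm M (x + t • h) =
      t * (1 - t) * quadForm M h := by
  simp only [quadForm, map_add, map_smul, inner_add_left, inner_add_right, real_inner_smul_left,
    real_inner_smul_right]
  ring

lemma quadForm_le_mul_norm_sq {M : Matrix (Fin n) (Fin n) ℝ} {Λ : ℝ}
    (hΛ : ∀ z : EuclideanSpace ℝ (Fin n), ‖z‖ = 1 → quadForm M z ≤ Λ)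
    (v : EuclideanSpace ℝ (Fin n)) : quadForm M v ≤ Λ * ‖v‖ ^ 2 := by
  rcases eq_or_ne v 0 with rfl | hv
  · simp [quadForm]
  have hv' : 0 < ‖v‖ := norm_pos_iff.2 hv
  have hunit := hΛ (‖v‖⁻¹ • v) (by rw [norm_smul, norm_inv, norm_norm, inv_mul_cancel₀ hv'.ne'])
  rw [quadForm_smul, inv_pow, inv_mul_le_iff₀ (by positivity)] at hunit
  linarith

lemma mul_Lag_inv_smul (A : Matrix (Fin n) (Fin n) ℝ) {s : ℝ} (hs : s ≠ 0)
    (v : EuclideanSpace ℝ (Fin n)) :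
    s * Lag A (s⁻¹ • v) = (2 * s)⁻¹ * quadForm A⁻¹ v := by
  simp only [Lag, quadForm, map_smul, real_inner_smul_left, real_inner_smul_right]
  field_simp

def HasQuadraticSupportAbove (M : Matrix (Fin n) (Fin n) ℝ) (κ : ℝ)
    (v : EuclideanSpace ℝ (Fin n) → ℝ) (S : Set (EuclideanSpace ℝ (Fin n))) : Prop :=
  ∀ m ∈ S, ∃ w, ∀ b ∈ S, v b - κ * quadForm M (b - w) ≤ v m - κ * quadForm M (m - w)

variable {M : Matrix (Fin n) (Fin n) ℝ} {κ : ℝ} {v : EuclideanSpace ℝ (Fin n) → ℝ}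
  {S : Set (EuclideanSpace ℝ (Fin n))}

lemma hasQuadraticSupportAbove_of_isLeast {Ω : Set (EuclideanSpace ℝ (Fin n))}
    {g : EuclideanSpace ℝ (Fin n) → ℝ}
    (hv : ∀ x ∈ S, IsLeast {r | ∃ y ∈ Ω, r = κ * quadForm M (x - y) + g y} (v x)) :
    HasQuadraticSupportAbove M κ v S := by
  intro m hm
  obtain ⟨⟨w, hw, hvm⟩, -⟩ := hv m hm
  refine ⟨w, fun b hb => ?_⟩
  have hvb : v b ≤ κ * quadForm M (b - w) + g w := (hv b hb).2 ⟨w, hw, rfl⟩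
  linarith

lemma HasQuadraticSupportAbove.convex_combination_le (hv : HasQuadraticSupportAbove M κ v S)
    {a b : EuclideanSpace ℝ (Fin n)} {t : ℝ} (ha : a ∈ S) (hb : b ∈ S)
    (hm : a + t • (b - a) ∈ S) (ht0 : 0 ≤ t) (ht1 : t ≤ 1) :
    (1 - t) * v a + t * v b ≤ v (a + t • (b - a)) + t * (1 - t) * (κ * quadForm M (b - a)) := by
  obtain ⟨w, hw⟩ := hv _ hm
  have hid := quadForm_convex_combination M (a - w) (b - a) t
  rw [show a - w + (b - a) = b - w by abel, show a - w + t • (b - a) = a + t • (b - a) - w by abel]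
    at hid
  nlinarith [mul_le_mul_of_nonneg_left (hw a ha) (sub_nonneg.2 ht1),
    mul_le_mul_of_nonneg_left (hw b hb) ht0, congrArg (κ * ·) hid]

lemma spaceSuperDiff.eventually_sub_le {w : EuclideanSpace ℝ (Fin n) → ℝ}
    {x p : EuclideanSpace ℝ (Fin n)} (hp : spaceSuperDiff w x p) (h : EuclideanSpace ℝ (Fin n))
    {ε : ℝ} (hε : 0 < ε) :
    ∀ᶠ t in 𝓝[>] (0 : ℝ), w (x + t • h) - w x ≤ t * (⟪p, h⟫ + ε) := by
  rcases eq_or_ne h 0 with rfl | hh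
  · filter_upwards [self_mem_nhdsWithin] with t (ht : 0 < t)
    simpa using (mul_pos ht hε).le
  have hray : Tendsto (fun t : ℝ => x + t • h) (𝓝[>] 0) (𝓝[≠] x) := by
    refine tendsto_nhdsWithin_iff.2 ⟨?_, ?_⟩
    · exact (Continuous.tendsto' (by fun_prop) 0 x (by simp)).mono_left nhdsWithin_le_nhds
    · filter_upwards [self_mem_nhdsWithin] with t (ht : 0 < t)
      simpa using smul_ne_zero ht.ne' hh
  filter_upwards [hray.eventually (hp (ε / ‖h‖) (by positivity)), self_mem_nhdsWithin]
    with t hineq (ht : 0 < t)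
  simp only [add_sub_cancel_left, real_inner_smul_right, norm_smul, Real.norm_of_nonneg ht.le]
    at hineq
  have hεt : ε / ‖h‖ * (t * ‖h‖) = t * ε := by field_simp
  linarith

lemma HasQuadraticSupportAbove.sub_le_inner_add (hv : HasQuadraticSupportAbove M κ v S)
    (hS : IsOpen S) {a b p : EuclideanSpace ℝ (Fin n)} (ha : a ∈ S) (hb : b ∈ S)
    (hp : spaceSuperDiff v a p) :
    v b - v a ≤ ⟪p, b - a⟫ + κ * quadForm M (b - a) := by
  set h := b - a
  refine le_of_forall_pos_le_add fun ε hε => ?_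
  have hnear : ∀ᶠ t in 𝓝[>] (0 : ℝ), a + t • h ∈ S ∧ t < 1 := by
    refine eventually_nhdsWithin_of_eventually_nhds (Eventually.and ?_ (eventually_lt_nhds one_pos))
    exact (Continuous.tendsto' (by fun_prop) 0 a (by simp)).eventually (hS.mem_nhds ha)
  have hbound : ∀ᶠ t in 𝓝[>] (0 : ℝ),
      v b - v a ≤ ⟪p, h⟫ + ε + (1 - t) * (κ * quadForm M h) := by
    filter_upwards [hp.eventually_sub_le h hε, hnear, self_mem_nhdsWithin]
      with t hray ⟨hm, ht1⟩ (ht0 : 0 < t)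
    have hconv := hv.convex_combination_le ha hb hm ht0.le ht1.le
    refine le_of_mul_le_mul_left ?_ ht0
    linarith
  have hlim : Tendsto (fun t : ℝ => ⟪p, h⟫ + ε + (1 - t) * (κ * quadForm M h)) (𝓝[>] 0)
      (𝓝 (⟪p, h⟫ + ε + κ * quadForm M h)) :=
    (Continuous.tendsto' (by fun_prop) 0 _ (by simp)).mono_left nhdsWithin_le_nhds
  linarith [ge_of_tendsto hlim hbound]

lemma HasQuadraticSupportAbove.inner_sub_sub_le (hv : HasQuadraticSupportAbove M κ v S)
    (hS : IsOpen S) {x y p q : EuclideanSpace ℝ (Fin n)} (hx : x ∈ S) (hy : y ∈ S)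
    (hp : spaceSuperDiff v x p) (hq : spaceSuperDiff v y q) :
    ⟪p - q, x - y⟫ ≤ 2 * κ * quadForm M (x - y) := by
  have hxy := hv.sub_le_inner_add hS hx hy hp
  have hyx := hv.sub_le_inner_add hS hy hx hq
  rw [← neg_sub x y, quadForm_neg, inner_neg_right] at hxy
  rw [inner_sub_left]
  linarith

end QuadraticSupport

lemma mk_mem_tball {n : ℕ} {tbar t' R : ℝ} {x' z : EuclideanSpace ℝ (Fin n)} (ht : tbar < t')
    (hz : z ∈ Metric.ball x' R) : (t', z) ∈ tball tbar (t', x') R := by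
  refine ⟨ht, ?_⟩
  rw [mem_ball, dist_eq_norm] at hz
  simpa [pball, pnorm, Real.sqrt_sq (norm_nonneg _)] using hz

theorem statement6
    {n : ℕ}
    (Ω : Set (EuclideanSpace ℝ (Fin n)))
    (A : Matrix (Fin n) (Fin n) ℝ)
    (u : ℝ × EuclideanSpace ℝ (Fin n) → ℝ)
    (t' : ℝ) (x' : EuclideanSpace ℝ (Fin n))
    (R : ℝ) (tbar : ℝ) (htbar : tbar < t')
    (hmin : ∀ X ∈ tball tbar (t', x') R,
      IsLeast {v | ∃ y ∈ Ω,
        v = (X.1 - tbar) * Lag A ((X.1 - tbar)⁻¹ • (X.2 - y)) + u (tbar, y)} (u X))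
    (Λ : ℝ) (hΛ : IsGreatest {r | ∃ z : EuclideanSpace ℝ (Fin n), ‖z‖ = 1 ∧
      r = ⟪Matrix.toEuclideanLin A⁻¹ z, z⟫} Λ)
    (x y : EuclideanSpace ℝ (Fin n))
    (hx : x ∈ Metric.ball x' R) (hy : y ∈ Metric.ball x' R)
    (p q : EuclideanSpace ℝ (Fin n))
    (hp : spaceSuperDiff (fun z => u (t', z)) x p)
    (hq : spaceSuperDiff (fun z => u (t', z)) y q) :
    ⟪p - q, x - y⟫ ≤ Λ / (t' - tbar) * ‖x - y‖ ^ 2 := by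
  have hs : 0 < t' - tbar := sub_pos.2 htbar
  have hsupp : HasQuadraticSupportAbove A⁻¹ (2 * (t' - tbar))⁻¹ (fun z => u (t', z))
      (Metric.ball x' R) :=
    hasQuadraticSupportAbove_of_isLeast fun z hz => by
      simpa only [mul_Lag_inv_smul A hs.ne'] using hmin _ (mk_mem_tball htbar hz)
  have hray := quadForm_le_mul_norm_sq (fun z hz => hΛ.2 ⟨z, hz, rfl⟩) (x - y)
  calc ⟪p - q, x - y⟫ ≤ 2 * (2 * (t' - tbar))⁻¹ * quadForm A⁻¹ (x - y) :=
        hsupp.inner_sub_sub_le isOpen_ball hx hy hp hq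
    _ = (t' - tbar)⁻¹ * quadForm A⁻¹ (x - y) := by field_simp
    _ ≤ (t' - tbar)⁻¹ * (Λ * ‖x - y‖ ^ 2) := by gcongr
    _ = Λ / (t' - tbar) * ‖x - y‖ ^ 2 := by ring
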